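/- If f is a minterm-transitive Boolean function on n variables, then bs(f) = O(s(f)³), i.e., there is an absolute constant C with bs(f) ≤ C·s(f)³. -/

import Mathlib

/-- Flip the `i`-th bit of `x`. -/
def flipBit {n : ℕ} (x : Fin n → Bool) (i : Fin n) : Fin n → Bool :=
  fun j => if j = i then !x j else x j

/-- Flip all bits of `x` in the block `B`. -/
def flipSet {n : ℕ} (x : Fin n → Bool) (B : Finset (Fin n)) : Fin n → Bool :=
  fun j => if j ∈ B then !x j else x j

/-- Sensitivity of `f` at the input `x`. -/
def sensAt {n : ℕ} (f : (Fin n → Bool) → Bool) (x : Fin n → Bool) : ℕ :=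
  (Finset.univ.filter fun i => f (flipBit x i) ≠ f x).card

/-- Sensitivity of `f`. -/
def sens {n : ℕ} (f : (Fin n → Bool) → Bool) : ℕ :=
  Finset.univ.sup fun x => sensAt f x

/-- 0-sensitivity of `f`: max sensitivity over inputs where `f` is 0. -/
def sens0 {n : ℕ} (f : (Fin n → Bool) → Bool) : ℕ :=
  (Finset.univ.filter fun x => f x = false).sup fun x => sensAt f x

/-- 1-sensitivity of `f`: max sensitivity over inputs where `f` is 1. -/
def sens1 {n : ℕ} (f : (Fin n → Bool) → Bool) : ℕ :=
  (Finset.univ.filter fun x => f x = true).sup fun x => sensAt f x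

/-- Block sensitivity of `f` at `x`: the largest number of pairwise disjoint
nonempty blocks each of whose flips changes the value of `f` at `x`. -/
noncomputable def bsensAt {n : ℕ} (f : (Fin n → Bool) → Bool) (x : Fin n → Bool) : ℕ :=
  sSup {r : ℕ | ∃ B : Fin r → Finset (Fin n),
    (∀ j, (B j).Nonempty ∧ f (flipSet x (B j)) ≠ f x) ∧
    ∀ j j', j ≠ j' → Disjoint (B j) (B j')}

/-- Block sensitivity of `f`. -/
noncomputable def bsens {n : ℕ} (f : (Fin n → Bool) → Bool) : ℕ :=
  Finset.univ.sup fun x => bsensAt f x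

/-- A permutation group on `[n]` is transitive. -/
def IsTransitive {n : ℕ} (G : Subgroup (Equiv.Perm (Fin n))) : Prop :=
  ∀ i j : Fin n, ∃ π ∈ G, π i = j

open Classical in
/-- The minterm-transitive function `p^G` defined by the partial assignment
`p` with support `S`: it is 1 on `x` iff `x` extends some `G`-shift of `p`. -/
noncomputable def mintermFn {n : ℕ} (G : Subgroup (Equiv.Perm (Fin n)))
    (S : Finset (Fin n)) (p : Fin n → Bool) : (Fin n → Bool) → Bool :=
  fun x => decide (∃ π ∈ G, ∀ i ∈ S, x (π i) = p i)

/-!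
Since `bs(f) ≤ n`, it suffices to bound `n` by the sensitivity. Let `k = |S|`.

At the `1`-input that equals `p` on `S` and `!v` elsewhere, every bit of `S` where `p` is `v`
is sensitive, since flipping it leaves fewer than the required number of `v`s. Hence
`k ≤ 2 s₁(f)`.

Take a maximal pairwise disjoint family `F` of `G`-translates of `S`. Its union `U` meets every
translate, and averaging over the transitive group `G` gives `n ≤ |U| k ≤ |F| k²`. Starting from
the constant input `!v`, where `v` is a value of `p`, the parts of the shifted minterms on the
translates in `F` where they equal `v` are disjoint blocks, each of which forces `f` to `1` once
it is set to `v`. Pushing bits toward `v` as long as `f` stays `0` yields a `0`-input that is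
sensitive in every block, so `|F| ≤ s₀(f)` and `n ≤ s₀(f) k² ≤ 4 s(f)³`.
-/

open Finset Function

section Basic

variable {n : ℕ}

lemma sens0_le_sens (f : (Fin n → Bool) → Bool) : sens0 f ≤ sens f :=
  sup_mono (filter_subset _ _)

lemma sens1_le_sens (f : (Fin n → Bool) → Bool) : sens1 f ≤ sens f :=
  sup_mono (filter_subset _ _)

lemma bsensAt_le_card (f : (Fin n → Bool) → Bool) (x : Fin n → Bool) : bsensAt f x ≤ n := by
  refine csSup_le ⟨0, Fin.elim0, fun j => j.elim0, fun j => j.elim0⟩ ?_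
  rintro r ⟨B, hB, hdisj⟩
  choose a ha using fun j => (hB j).1
  have ha_inj : Injective a := fun j j' h => by
    by_contra hne
    exact disjoint_left.mp (hdisj j j' hne) (ha j) (h ▸ ha j')
  simpa using Fintype.card_le_of_injective a ha_inj

lemma bsens_le_card (f : (Fin n → Bool) → Bool) : bsens f ≤ n :=
  Finset.sup_le fun x _ => bsensAt_le_card f x

lemma filter_flipBit_eq_erase {x : Fin n → Bool} {v : Bool} {a : Fin n} (ha : x a = v) :
    univ.filter (fun b => flipBit x a b = v) = (univ.filter fun b => x b = v).erase a := by
  ext b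
  simp only [mem_filter, mem_erase, mem_univ, true_and]
  by_cases hb : b = a
  · subst hb; simp [flipBit, ha]
  · simp [flipBit, hb]

lemma filter_flipBit_eq_insert {O : Finset (Fin n)} {x : Fin n → Bool} {v : Bool} {a : Fin n}
    (haO : a ∈ O) (ha : x a ≠ v) :
    O.filter (fun b => flipBit x a b = v) = insert a (O.filter fun b => x b = v) := by
  ext b
  simp only [mem_filter, mem_insert]
  by_cases hb : b = a
  · subst hb; simp [flipBit, haO, Bool.eq_not_of_ne ha]
  · simp [flipBit, hb]

end Basic

section Minterm

variable {n : ℕ} {G : Subgroup (Equiv.Perm (Fin n))} {S : Finset (Fin n)} {p : Fin n → Bool}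

lemma mintermFn_eq_true_iff {x : Fin n → Bool} :
    mintermFn G S p x = true ↔ ∃ π ∈ G, ∀ i ∈ S, x (π i) = p i := by
  simp [mintermFn]

lemma card_filter_le_of_mintermFn_eq_true {x : Fin n → Bool} (hx : mintermFn G S p x = true)
    (v : Bool) : #(S.filter fun i => p i = v) ≤ #(univ.filter fun a => x a = v) := by
  obtain ⟨π, -, hπ⟩ := mintermFn_eq_true_iff.mp hx
  refine card_le_card_of_injOn π (fun i hi => ?_) π.injective.injOn
  rw [mem_coe, mem_filter] at hi
  simp [hπ i hi.1, hi.2]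

lemma card_filter_le_sens1 (v : Bool) :
    #(S.filter fun i => p i = v) ≤ sens1 (mintermFn G S p) := by
  set x : Fin n → Bool := fun i => if i ∈ S then p i else !v
  have hx : mintermFn G S p x = true :=
    mintermFn_eq_true_iff.mpr ⟨1, one_mem G, fun i hi => by simp [x, hi]⟩
  have hcount : univ.filter (fun a => x a = v) = S.filter fun i => p i = v := by
    ext a
    by_cases ha : a ∈ S <;> simp [x, ha]
  have hsens : S.filter (fun i => p i = v) ⊆
      univ.filter fun i => mintermFn G S p (flipBit x i) ≠ mintermFn G S p x := by
    intro i hi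
    have hxi : x i = v := by rw [mem_filter] at hi; simp [x, hi.1, hi.2]
    have hfit := fun h : mintermFn G S p (flipBit x i) = true =>
      card_filter_le_of_mintermFn_eq_true h v
    rw [filter_flipBit_eq_erase hxi, hcount] at hfit
    simp only [mem_filter, mem_univ, true_and, hx, ne_eq, Bool.not_eq_true]
    by_contra h
    exact (card_erase_lt_of_mem hi).not_ge (hfit (Bool.eq_true_of_not_eq_false h))
  calc _ ≤ sensAt (mintermFn G S p) x := card_le_card hsens
    _ ≤ _ := le_sup (by simp [hx])

lemma card_le_two_mul_sens1 : #S ≤ 2 * sens1 (mintermFn G S p) := by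
  have hsplit := card_filter_add_card_filter_not (s := S) (fun i => p i = true)
  simp only [Bool.not_eq_true] at hsplit
  have := card_filter_le_sens1 (G := G) (S := S) (p := p) true
  have := card_filter_le_sens1 (G := G) (S := S) (p := p) false
  omega

end Minterm

lemma Finset.exists_pairwiseDisjoint_subset_not_disjoint_biUnion {α : Type*} [DecidableEq α]
    (𝒯 : Finset (Finset α)) :
    ∃ F ⊆ 𝒯, (F : Set (Finset α)).PairwiseDisjoint id ∧
      ∀ T ∈ 𝒯, T.Nonempty → ¬Disjoint T (F.biUnion id) := by
  classical
  obtain ⟨F, hF, hmax⟩ :=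
    (𝒯.powerset.filter fun F : Finset (Finset α) => (F : Set (Finset α)).PairwiseDisjoint id)
    |>.exists_max_image card ⟨∅, by simp⟩
  rw [mem_filter, mem_powerset] at hF
  refine ⟨F, hF.1, hF.2, fun T hT hTne hdisj => ?_⟩
  have hTF : T ∉ F := fun hTF =>
    hTne.ne_empty (disjoint_self.mp (hdisj.mono_right (subset_biUnion_of_mem id hTF)))
  have hins := hmax (insert T F) <| by
    rw [mem_filter, mem_powerset, coe_insert]
    exact ⟨insert_subset hT hF.1,
      hF.2.insert fun T' hT' _ => hdisj.mono_right (subset_biUnion_of_mem id hT')⟩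
  rw [card_insert_of_notMem hTF] at hins
  omega

section Sensitivity

variable {n : ℕ} (f : (Fin n → Bool) → Bool)

/-- Among the `0`-inputs that agree with `x₀` outside `O`, one with the most `v`s on `O` is
sensitive at every bit of `O` that is not yet `v`. -/
lemma exists_eq_false_flipBit_eq_true (O : Finset (Fin n)) (v : Bool) {x₀ : Fin n → Bool}
    (hx₀ : f x₀ = false) :
    ∃ x, f x = false ∧ (∀ a ∉ O, x a = x₀ a) ∧ ∀ a ∈ O, x a ≠ v → f (flipBit x a) = true := by
  obtain ⟨x, hxX, hmax⟩ := (univ.filter fun x => f x = false ∧ ∀ a ∉ O, x a = x₀ a)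
    |>.exists_max_image (fun x => #(O.filter fun a => x a = v)) ⟨x₀, by simp [hx₀]⟩
  simp only [mem_filter, mem_univ, true_and] at hxX
  refine ⟨x, hxX.1, hxX.2, fun a haO hav => ?_⟩
  by_contra hflip
  have hmore := hmax (flipBit x a) <| by
    simp only [mem_filter, mem_univ, true_and, Bool.not_eq_true] at hflip ⊢
    refine ⟨hflip, fun b hb => ?_⟩
    rw [flipBit, if_neg (ne_of_mem_of_not_mem haO hb).symm]
    exact hxX.2 b hb
  rw [filter_flipBit_eq_insert haO hav, card_insert_of_notMem (by simp [hav])] at hmore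
  omega

lemma card_le_sens0_of_forcing_blocks {ι : Type*} [Fintype ι] (O : ι → Finset (Fin n))
    (hO : Pairwise (Disjoint on O)) (v : Bool) {x₀ : Fin n → Bool} (hx₀ : f x₀ = false)
    (hforce : ∀ i x, (∀ a ∉ univ.biUnion O, x a = x₀ a) → (∀ a ∈ O i, x a = v) →
      f x = true) :
    Fintype.card ι ≤ sens0 f := by
  obtain ⟨x, hx, hxO, hsens⟩ := exists_eq_false_flipBit_eq_true f (univ.biUnion O) v hx₀
  have hblock : ∀ i, ∃ a ∈ O i, x a ≠ v := fun i => by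
    by_contra! h
    simp [hforce i x hxO h] at hx
  choose a haO hav using hblock
  have ha_inj : Injective a := fun i j h => by
    by_contra hne
    exact disjoint_left.mp (hO hne) (haO i) (h ▸ haO j)
  calc Fintype.card ι = #(univ : Finset ι) := rfl
    _ ≤ sensAt f x := card_le_card_of_injOn a (fun i _ => by
        simp [hsens _ (mem_biUnion.mpr ⟨i, mem_univ _, haO i⟩) (hav i), hx]) ha_inj.injOn
    _ ≤ sens0 f := le_sup (by simp [hx])

end Sensitivity

section Transitive

variable {n : ℕ} {G : Subgroup (Equiv.Perm (Fin n))} [DecidablePred (· ∈ G)]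

lemma IsTransitive.card_filter_apply_eq_mul (hG : IsTransitive G) (s u : Fin n) :
    #(univ.filter fun π : G => (π : Equiv.Perm (Fin n)) s = u) * n = Fintype.card G := by
  have hfiber : ∀ u', #(univ.filter fun π : G => (π : Equiv.Perm (Fin n)) s = u') =
      #(univ.filter fun π : G => (π : Equiv.Perm (Fin n)) s = u) := fun u' => by
    obtain ⟨σ, hσG, hσ⟩ := hG u' u
    refine card_bij' (fun π _ => ⟨σ, hσG⟩ * π) (fun π _ => ⟨σ, hσG⟩⁻¹ * π) ?_ ?_ ?_ ?_ <;>
      intro π hπ <;> simp_all [Equiv.Perm.mul_apply, ← hσ]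
  calc _ = ∑ u' : Fin n, #(univ.filter fun π : G => (π : Equiv.Perm (Fin n)) s = u') := by
        simp [hfiber, mul_comm]
    _ = Fintype.card G := (card_eq_sum_card_fiberwise fun π _ => mem_univ _).symm

lemma IsTransitive.card_le_card_mul_card (hG : IsTransitive G) {S U : Finset (Fin n)}
    (hU : ∀ π ∈ G, ∃ s ∈ S, π s ∈ U) : n ≤ #U * #S := by
  have hmeet : ∀ π : G, 1 ≤ #(S.filter fun s => (π : Equiv.Perm (Fin n)) s ∈ U) := fun π => by
    obtain ⟨s, hs, hsU⟩ := hU π π.2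
    exact card_pos.mpr ⟨s, mem_filter.mpr ⟨hs, hsU⟩⟩
  have hfiber : ∀ s, #(univ.filter fun π : G => (π : Equiv.Perm (Fin n)) s ∈ U) * n =
      #U * Fintype.card G := fun s => by
    rw [card_eq_sum_card_fiberwise (f := fun π : G => (π : Equiv.Perm (Fin n)) s) (t := U)
      (s := univ.filter fun π : G => (π : Equiv.Perm (Fin n)) s ∈ U)
      fun π hπ => (mem_filter.mp hπ).2, sum_mul]
    calc _ = ∑ u ∈ U, #(univ.filter fun π : G => (π : Equiv.Perm (Fin n)) s = u) * n :=
          sum_congr rfl fun u hu => by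
            rw [filter_filter]
            congr 2
            exact filter_congr fun π _ => ⟨And.right, fun h => ⟨h ▸ hu, h⟩⟩
      _ = #U * Fintype.card G := by simp [hG.card_filter_apply_eq_mul]
  refine le_of_mul_le_mul_left ?_ (Fintype.card_pos (α := G))
  calc Fintype.card G * n
        ≤ (∑ π : G, #(S.filter fun s => (π : Equiv.Perm (Fin n)) s ∈ U)) * n := by
        gcongr
        rw [Fintype.card_eq_sum_ones]
        exact sum_le_sum fun π _ => hmeet π
    _ = ∑ s ∈ S, #(univ.filter fun π : G => (π : Equiv.Perm (Fin n)) s ∈ U) * n := by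
        simp only [card_filter, sum_mul]
        rw [sum_comm]
    _ = Fintype.card G * (#U * #S) := by
        simp [hfiber]
        ring

end Transitive

section Translates

variable {n : ℕ} {G : Subgroup (Equiv.Perm (Fin n))} {S : Finset (Fin n)} {p : Fin n → Bool}

lemma card_le_sens0_of_pairwiseDisjoint_translates (hS : S.Nonempty) {F : Finset (Finset (Fin n))}
    (hFdisj : (F : Set (Finset (Fin n))).PairwiseDisjoint id)
    (hFG : ∀ T ∈ F, ∃ π ∈ G, S.image π = T) :
    #F ≤ sens0 (mintermFn G S p) := by
  choose φ hφG hφS using hFG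
  obtain ⟨s₀, hs₀⟩ := hS
  set v := p s₀
  set O : F → Finset (Fin n) := fun T => (S.filter fun i => p i = v).image (φ T T.2)
  have hOT : ∀ T : F, O T ⊆ T := fun T => hφS T T.2 ▸ image_subset_image (filter_subset _ _)
  have hFdisj' : ∀ T T' : F, T ≠ T' → Disjoint (T : Finset (Fin n)) T' := fun T T' hne =>
    hFdisj T.2 T'.2 (Subtype.coe_ne_coe.mpr hne)
  have hx₀ : mintermFn G S p (fun _ => !v) = false := by
    by_contra h
    obtain ⟨π, -, hπ⟩ := mintermFn_eq_true_iff.mp (Bool.eq_true_of_not_eq_false h)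
    exact Bool.eq_not_self v |>.mp (hπ s₀ hs₀).symm
  rw [← Fintype.card_coe]
  refine card_le_sens0_of_forcing_blocks _ O (fun T T' hne => (hFdisj' T T' hne).mono
    (hOT T) (hOT T')) v hx₀ fun T x hxO hxT => ?_
  refine mintermFn_eq_true_iff.mpr ⟨φ T T.2, hφG T T.2, fun i hi => ?_⟩
  by_cases hpi : p i = v
  · exact hpi ▸ hxT _ (mem_image_of_mem _ (mem_filter.mpr ⟨hi, hpi⟩))
  have hout : φ T T.2 i ∉ univ.biUnion O := by
    simp only [mem_biUnion, mem_univ, true_and, not_exists]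
    intro T' hT'
    obtain rfl | hne := eq_or_ne T' T
    · obtain ⟨j, hj, hji⟩ := mem_image.mp hT'
      rw [(φ T' T'.2).injective hji] at hj
      exact hpi (mem_filter.mp hj).2
    · have hiT : φ T T.2 i ∈ (T : Finset (Fin n)) := by
        simpa only [hφS] using mem_image_of_mem (φ T T.2) hi
      exact disjoint_left.mp (hFdisj' T' T hne) (hOT T' hT') hiT
  rw [hxO _ hout, Bool.eq_not_of_ne hpi]

lemma IsTransitive.card_le_sens0_mul_card_sq (hG : IsTransitive G) (hS : S.Nonempty) :
    n ≤ sens0 (mintermFn G S p) * #S ^ 2 := by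
  classical
  obtain ⟨F, hF𝒯, hFdisj, hFhit⟩ :=
    exists_pairwiseDisjoint_subset_not_disjoint_biUnion <|
      (univ : Finset G).image fun π : G => S.image (π : Equiv.Perm (Fin n))
  have hFG : ∀ T ∈ F, ∃ π ∈ G, S.image π = T := fun T hT => by
    obtain ⟨π, -, rfl⟩ := mem_image.mp (hF𝒯 hT)
    exact ⟨(π : Equiv.Perm (Fin n)), π.2, rfl⟩
  have hhit : n ≤ #(F.biUnion id) * #S := hG.card_le_card_mul_card fun π hπ => by
    obtain ⟨a, ha, haU⟩ := not_disjoint_iff.mp <|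
      hFhit _ (mem_image_of_mem _ (mem_univ (⟨π, hπ⟩ : G))) (hS.image _)
    obtain ⟨s, hs, rfl⟩ := mem_image.mp ha
    exact ⟨s, hs, haU⟩
  have hunion : #(F.biUnion id) ≤ #F * #S := card_biUnion_le_card_mul _ _ _ fun T hT => by
    obtain ⟨π, -, rfl⟩ := hFG T hT
    exact card_image_le
  calc n ≤ #F * #S * #S := hhit.trans (Nat.mul_le_mul_right _ hunion)
    _ ≤ sens0 (mintermFn G S p) * #S ^ 2 := by
      rw [mul_assoc, ← sq]
      gcongr
      exact card_le_sens0_of_pairwiseDisjoint_translates hS hFdisj hFG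

end Translates

/-- For minterm-transitive functions, block sensitivity is `O(s(f)³)`. -/
theorem bsens_le_sens_cubed :
    ∃ C : ℝ, 0 < C ∧
      ∀ (n k : ℕ) (G : Subgroup (Equiv.Perm (Fin n))), IsTransitive G →
        ∀ (S : Finset (Fin n)) (p : Fin n → Bool), S.card = k → 1 ≤ k →
          (bsens (mintermFn G S p) : ℝ) ≤ C * (sens (mintermFn G S p) : ℝ) ^ 3 := by
  refine ⟨4, by norm_num, fun n k G hG S p hk hk1 => ?_⟩
  set f := mintermFn G S p
  have hS : S.Nonempty := card_pos.mp (by omega)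
  have hcard : #S ≤ 2 * sens f := card_le_two_mul_sens1.trans (by gcongr; exact sens1_le_sens f)
  have hbound : bsens f ≤ 4 * sens f ^ 3 :=
    calc bsens f ≤ n := bsens_le_card f
      _ ≤ sens0 f * #S ^ 2 := hG.card_le_sens0_mul_card_sq hS
      _ ≤ sens f * (2 * sens f) ^ 2 := by gcongr; exact sens0_le_sens f
      _ = 4 * sens f ^ 3 := by ring
  exact_mod_cast hbound
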